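/- arXiv:2107.03754 — 2 statements merged into one kernel-verified Lean document; each statement's English description precedes it below -/
import Mathlib

section
/- Set λ = L1²·L2²/(σ1·σ2). Let x̃1, x̃2 ∈ Q1, let p̃1, p̃2 be δ1-inexact solutions of min_{p∈Q2} Φ(x̃1,p) and min_{p∈Q2} Φ(x̃2,p), respectively, and let x̂1, x̂2 be δ2-inexact solutions of min_{x∈Q1} Φ(x,p̃1) and min_{x∈Q1} Φ(x,p̃2), respectively. Then ‖x̂1 − x̂2‖ ≤ λ·‖x̃1 − x̃2‖ + 2·√(2δ2/σ1) + 2·√(2δ1/σ2)·(L1·L2/σ1). Analogously, if p̃1, p̃2 ∈ Q2, x̂1, x̂2 are δ2-inexact solutions of min_{x∈Q1} Φ(x,p̃1) and min_{x∈Q1} Φ(x,p̃2), and q̂1, q̂2 are δ1-inexact solutions of min_{p∈Q2} Φ(x̂1,p) and min_{p∈Q2} Φ(x̂2,p), then ‖q̂1 − q̂2‖ ≤ λ·‖p̃1 − p̃2‖ + 2·√(2δ1/σ2) + 2·√(2δ2/σ1)·(L1·L2/σ2). -/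
open Finset Filter

/-- `F₀` is `β`-strongly convex on `Q` w.r.t. the norm-like function `Nrm`. -/
def StrongConvexOnW {V : Type*} [AddCommGroup V] [Module ℝ V]
    (Q : Set V) (Nrm : V → ℝ) (β : ℝ) (F₀ : V → ℝ) : Prop :=
  ∀ ⦃x⦄, x ∈ Q → ∀ ⦃y⦄, y ∈ Q → ∀ ⦃α : ℝ⦄, 0 ≤ α → α ≤ 1 →
    F₀ (α • x + (1 - α) • y) ≤
      α * F₀ x + (1 - α) * F₀ y - α * (1 - α) * (β / 2) * Nrm (x - y) ^ 2

/-- `zt` is a `δ`-inexact solution of `min_{z ∈ Q} F₀ z`, where `zs` is the exact minimizer. -/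
def InexactSol {V : Type*} [NormedAddCommGroup V] [NormedSpace ℝ V]
    (Q : Set V) (F₀ : V → ℝ) (zs zt : V) (δ : ℝ) : Prop :=
  zt ∈ Q ∧ ∃ g : V →L[ℝ] ℝ, (∀ y ∈ Q, F₀ zt + g (y - zt) ≤ F₀ y) ∧ -δ ≤ g (zs - zt)

/-- The dual norm of `normH` w.r.t. the standard inner product on `ℝ^m`. -/
noncomputable def dualNormH {m : ℕ} (normH : (Fin m → ℝ) → ℝ) (z : Fin m → ℝ) : ℝ :=
  sSup {r | ∃ y, normH y ≤ 1 ∧ r = ∑ j, z j * y j}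

section Aux

lemma normH_sum_le' {m : ℕ} {ι : Type*} (normH : (Fin m → ℝ) → ℝ)
    (hN0 : normH 0 = 0) (hNtri : ∀ y z, normH (y + z) ≤ normH y + normH z)
    (s : Finset ι) (g : ι → Fin m → ℝ) :
    normH (∑ i ∈ s, g i) ≤ ∑ i ∈ s, normH (g i) := by
  classical
  induction s using Finset.cons_induction with
  | empty => simp [hN0]
  | cons a s ha ih =>
    rw [Finset.sum_cons, Finset.sum_cons]
    exact (hNtri _ _).trans (by linarith)

lemma norm_le_c_normH' {m : ℕ} (normH : (Fin m → ℝ) → ℝ)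
    (hNpos : ∀ y, 0 ≤ normH y)
    (hNdef : ∀ y, normH y = 0 → y = 0)
    (hNhom : ∀ (c : ℝ) (y : Fin m → ℝ), normH (c • y) = |c| * normH y)
    (hNtri : ∀ y z, normH (y + z) ≤ normH y + normH z) :
    ∃ c : ℝ, 0 < c ∧ ∀ y, ‖y‖ ≤ c * normH y := by
  have hN0 : normH 0 = 0 := by have := hNhom 0 0; simpa using this
  rcases Nat.eq_zero_or_pos m with hm | hm
  · refine ⟨1, one_pos, fun y => ?_⟩
    subst hm
    have hy : y = 0 := Subsingleton.elim y 0
    rw [hy, norm_zero, hN0]; norm_num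
  set C : ℝ := ∑ i : Fin m, normH (Pi.single i 1) with hC
  have hupper : ∀ y : Fin m → ℝ, normH y ≤ C * ‖y‖ := by
    intro y
    have hy : y = ∑ i : Fin m, Pi.single i (y i) := (Finset.univ_sum_single y).symm
    calc normH y = normH (∑ i : Fin m, Pi.single i (y i)) := by rw [← hy]
      _ ≤ ∑ i : Fin m, normH (Pi.single i (y i)) := normH_sum_le' normH hN0 hNtri _ _
      _ ≤ ∑ i : Fin m, ‖y‖ * normH (Pi.single i 1) := by
          refine Finset.sum_le_sum fun i _ => ?_
          have hsingle : (Pi.single i (y i) : Fin m → ℝ) = y i • (Pi.single i 1 : Fin m → ℝ) := by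
            ext j; by_cases h : j = i <;> simp [h, Pi.single_apply]
          rw [hsingle, hNhom]
          have h1 : |y i| ≤ ‖y‖ := by
            have := norm_le_pi_norm y i
            simpa [Real.norm_eq_abs] using this
          exact mul_le_mul_of_nonneg_right h1 (hNpos _)
      _ = C * ‖y‖ := by rw [← Finset.mul_sum, hC, mul_comm]
  have hCnn : 0 ≤ C := Finset.sum_nonneg fun i _ => hNpos _
  have hcont : Continuous normH := by
    rw [Metric.continuous_iff]
    intro b ε hε
    rcases eq_or_lt_of_le hCnn with hC0 | hC0
    · exact ⟨1, one_pos, fun a _ => by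
        have h1 : normH a ≤ 0 := by have := hupper a; rw [← hC0] at this; simpa using this
        have h2 : normH b ≤ 0 := by have := hupper b; rw [← hC0] at this; simpa using this
        have h1' := hNpos a; have h2' := hNpos b
        have : normH a = normH b := by linarith
        simpa [Real.dist_eq, this] using hε⟩
    refine ⟨ε / C, div_pos hε hC0, fun a hab => ?_⟩
    have key : ∀ x y : Fin m → ℝ, normH x - normH y ≤ C * ‖x - y‖ := by
      intro x y
      have h3 := hNtri (x - y) y
      simp only [sub_add_cancel] at h3
      have h4 := hupper (x - y)
      linarith
    have h1 := key a b
    have h2 := key b a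
    have hba : ‖b - a‖ = ‖a - b‖ := norm_sub_rev b a
    rw [hba] at h2
    have hd : ‖a - b‖ < ε / C := by rwa [dist_eq_norm] at hab
    have hmul : C * ‖a - b‖ < C * (ε / C) := mul_lt_mul_of_pos_left hd hC0
    have hCe : C * (ε / C) = ε := by field_simp
    rw [Real.dist_eq, abs_sub_lt_iff]
    constructor <;> linarith
  haveI : Nonempty (Fin m) := ⟨⟨0, hm⟩⟩
  have hsne : (Metric.sphere (0 : Fin m → ℝ) 1).Nonempty :=
    NormedSpace.sphere_nonempty.2 zero_le_one
  obtain ⟨y₀, hy₀s, hy₀min⟩ := (isCompact_sphere (0 : Fin m → ℝ) 1).exists_isMinOn hsne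
    hcont.continuousOn
  have hy₀ : ‖y₀‖ = 1 := by simpa using (mem_sphere_zero_iff_norm.1 hy₀s)
  have hy₀ne : y₀ ≠ 0 := by intro h0; rw [h0] at hy₀; simp at hy₀
  have hcpos : 0 < normH y₀ := by
    rcases (hNpos y₀).lt_or_eq with hlt | heq
    · exact hlt
    · exact absurd (hNdef y₀ heq.symm) hy₀ne
  refine ⟨(normH y₀)⁻¹, inv_pos.2 hcpos, fun y => ?_⟩
  by_cases hy : y = 0
  · simp [hy, hN0]
  have hny : 0 < ‖y‖ := norm_pos_iff.2 hy
  have hmem : ‖y‖⁻¹ • y ∈ Metric.sphere (0 : Fin m → ℝ) 1 := by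
    simp [norm_smul, abs_of_nonneg (inv_nonneg.2 hny.le), inv_mul_cancel₀ hny.ne']
  have hmin := hy₀min hmem
  have heq : normH (‖y‖⁻¹ • y) = ‖y‖⁻¹ * normH y := by
    rw [hNhom, abs_of_nonneg (inv_nonneg.2 hny.le)]
  have hmin' : normH y₀ ≤ ‖y‖⁻¹ * normH y := by
    have h7 : normH y₀ ≤ normH (‖y‖⁻¹ • y) := hmin
    rwa [heq] at h7
  have h5 : normH y₀ * ‖y‖ ≤ normH y := by
    have h6 := mul_le_mul_of_nonneg_right hmin' hny.le
    calc normH y₀ * ‖y‖ ≤ ‖y‖⁻¹ * normH y * ‖y‖ := h6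
      _ = normH y := by field_simp
  calc ‖y‖ = (normH y₀)⁻¹ * (normH y₀ * ‖y‖) := by field_simp
    _ ≤ (normH y₀)⁻¹ * normH y := mul_le_mul_of_nonneg_left h5 (inv_nonneg.2 hcpos.le)

lemma pairing_le_dual_mul' {m : ℕ} (normH : (Fin m → ℝ) → ℝ)
    (hNpos : ∀ y, 0 ≤ normH y)
    (hNdef : ∀ y, normH y = 0 → y = 0)
    (hNhom : ∀ (c : ℝ) (y : Fin m → ℝ), normH (c • y) = |c| * normH y)
    (c : ℝ) (hc : 0 < c) (hcomp : ∀ y, ‖y‖ ≤ c * normH y)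
    (z w : Fin m → ℝ) :
    ∑ j, z j * w j ≤ dualNormH normH z * normH w := by
  have hN0 : normH 0 = 0 := by have := hNhom 0 0; simpa using this
  have hbdd : BddAbove {r | ∃ y, normH y ≤ 1 ∧ r = ∑ j, z j * y j} := by
    refine ⟨(∑ j, |z j|) * c, fun r hr => ?_⟩
    obtain ⟨y, hy1, rfl⟩ := hr
    have hyc : ∀ j, |y j| ≤ c := fun j => by
      have h1 : ‖y j‖ ≤ ‖y‖ := norm_le_pi_norm y j
      have h2 := hcomp y
      have h3 : c * normH y ≤ c * 1 := mul_le_mul_of_nonneg_left hy1 hc.le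
      simp only [Real.norm_eq_abs] at h1
      linarith
    calc ∑ j, z j * y j ≤ ∑ j, |z j| * c := by
          refine Finset.sum_le_sum fun j _ => ?_
          calc z j * y j ≤ |z j * y j| := le_abs_self _
            _ = |z j| * |y j| := abs_mul _ _
            _ ≤ |z j| * c := mul_le_mul_of_nonneg_left (hyc j) (abs_nonneg _)
      _ = (∑ j, |z j|) * c := by rw [Finset.sum_mul]
  rcases (hNpos w).lt_or_eq with hw | hw
  · have hy1 : normH ((normH w)⁻¹ • w) ≤ 1 := by
      rw [hNhom, abs_of_nonneg (inv_nonneg.2 hw.le), inv_mul_cancel₀ hw.ne']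
    have hmem : ∑ j, z j * ((normH w)⁻¹ • w) j ∈
        {r | ∃ y, normH y ≤ 1 ∧ r = ∑ j, z j * y j} := ⟨_, hy1, rfl⟩
    have hle := le_csSup hbdd hmem
    have heq : ∑ j, z j * ((normH w)⁻¹ • w) j = (normH w)⁻¹ * ∑ j, z j * w j := by
      rw [Finset.mul_sum]
      refine Finset.sum_congr rfl fun j _ => ?_
      simp [Pi.smul_apply, smul_eq_mul]; ring
    rw [heq] at hle
    have := mul_le_mul_of_nonneg_right hle hw.le
    calc ∑ j, z j * w j = (normH w)⁻¹ * (∑ j, z j * w j) * normH w := by field_simp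
      _ ≤ dualNormH normH z * normH w := this
  · have hw0 : w = 0 := hNdef w hw.symm
    subst hw0
    simp [← hw]

lemma dualNormH_nonneg' {m : ℕ} (normH : (Fin m → ℝ) → ℝ)
    (hNhom : ∀ (c : ℝ) (y : Fin m → ℝ), normH (c • y) = |c| * normH y)
    (c : ℝ) (hc : 0 < c) (hcomp : ∀ y, ‖y‖ ≤ c * normH y)
    (z : Fin m → ℝ) : 0 ≤ dualNormH normH z := by
  have hN0 : normH 0 = 0 := by have := hNhom 0 0; simpa using this
  have hbdd : BddAbove {r | ∃ y, normH y ≤ 1 ∧ r = ∑ j, z j * y j} := by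
    refine ⟨(∑ j, |z j|) * c, fun r hr => ?_⟩
    obtain ⟨y, hy1, rfl⟩ := hr
    have hyc : ∀ j, |y j| ≤ c := fun j => by
      have h1 : ‖y j‖ ≤ ‖y‖ := norm_le_pi_norm y j
      have h2 := hcomp y
      have h3 : c * normH y ≤ c * 1 := mul_le_mul_of_nonneg_left hy1 hc.le
      simp only [Real.norm_eq_abs] at h1
      linarith
    calc ∑ j, z j * y j ≤ ∑ j, |z j| * c := by
          refine Finset.sum_le_sum fun j _ => ?_
          calc z j * y j ≤ |z j * y j| := le_abs_self _
            _ = |z j| * |y j| := abs_mul _ _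
            _ ≤ |z j| * c := mul_le_mul_of_nonneg_left (hyc j) (abs_nonneg _)
      _ = (∑ j, |z j|) * c := by rw [Finset.sum_mul]
  have hmem : (0:ℝ) ∈ {r | ∃ y, normH y ≤ 1 ∧ r = ∑ j, z j * y j} :=
    ⟨0, by simp [hN0], by simp⟩
  exact le_csSup hbdd hmem

/-- Growth at the minimizer of a strongly convex function. -/
lemma strongconvex_growth' {V : Type*} [NormedAddCommGroup V] [NormedSpace ℝ V]
    {Q : Set V} (hQcv : Convex ℝ Q) {β : ℝ} {F₀ : V → ℝ}
    (hsc : StrongConvexOnW Q (fun x => ‖x‖) β F₀)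
    {zs : V} (hzs : zs ∈ Q) (hmin : ∀ y ∈ Q, F₀ zs ≤ F₀ y)
    {y : V} (hy : y ∈ Q) :
    F₀ zs + β / 2 * ‖y - zs‖ ^ 2 ≤ F₀ y := by
  have key : ∀ α : ℝ, α ∈ Set.Ioc (0:ℝ) 1 →
      (1 - α) * (β / 2) * ‖y - zs‖ ^ 2 ≤ F₀ y - F₀ zs := by
    rintro α ⟨h0, h1⟩
    have hc := hsc hy hzs h0.le h1
    have hmem : α • y + (1 - α) • zs ∈ Q := hQcv hy hzs h0.le (by linarith) (by ring)
    have hmin' := hmin _ hmem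
    have hmul : α * ((1 - α) * (β / 2) * ‖y - zs‖ ^ 2) ≤ α * (F₀ y - F₀ zs) := by
      nlinarith
    exact le_of_mul_le_mul_left hmul h0
  have ht : Tendsto (fun α : ℝ => (1 - α) * (β / 2) * ‖y - zs‖ ^ 2)
      (nhdsWithin 0 (Set.Ioi 0)) (nhds (β / 2 * ‖y - zs‖ ^ 2)) := by
    have hcont : Continuous (fun α : ℝ => (1 - α) * (β / 2) * ‖y - zs‖ ^ 2) := by
      continuity
    have := hcont.tendsto 0
    simp only [sub_zero, one_mul] at this
    exact this.mono_left nhdsWithin_le_nhds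
  have hev : ∀ᶠ α in nhdsWithin (0:ℝ) (Set.Ioi 0),
      (1 - α) * (β / 2) * ‖y - zs‖ ^ 2 ≤ F₀ y - F₀ zs := by
    filter_upwards [Ioc_mem_nhdsGT_of_mem (Set.left_mem_Ico.2 one_pos)] with α hα
    exact key α hα
  have := le_of_tendsto ht hev
  linarith

/-- Distance of an inexact solution from the exact minimizer. -/
lemma inexact_dist' {V : Type*} [NormedAddCommGroup V] [NormedSpace ℝ V]
    {Q : Set V} (hQcv : Convex ℝ Q) {β : ℝ} (hβ : 0 < β) {F₀ : V → ℝ}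
    (hsc : StrongConvexOnW Q (fun x => ‖x‖) β F₀)
    {zs zt : V} (hzs : zs ∈ Q) (hmin : ∀ y ∈ Q, F₀ zs ≤ F₀ y)
    {δ : ℝ} (hin : InexactSol Q F₀ zs zt δ) :
    ‖zt - zs‖ ≤ Real.sqrt (2 * δ / β) := by
  obtain ⟨hztQ, g, hg, hgs⟩ := hin
  have h1 := hg zs hzs
  have h2 := strongconvex_growth' hQcv hsc hzs hmin hztQ
  have h3 : β / 2 * ‖zt - zs‖ ^ 2 ≤ δ := by linarith
  have h4 : ‖zt - zs‖ ^ 2 ≤ 2 * δ / β := by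
    rw [le_div_iff₀ hβ]; nlinarith
  calc ‖zt - zs‖ = Real.sqrt (‖zt - zs‖ ^ 2) := by
        rw [Real.sqrt_sq (norm_nonneg _)]
    _ ≤ Real.sqrt (2 * δ / β) := Real.sqrt_le_sqrt h4

lemma sum_pair_expand' {m : ℕ} (A B CC D : Fin m → ℝ) :
    ∑ j, (A - B) j * (CC - D) j =
      (∑ j, A j * CC j) - (∑ j, B j * CC j) - (∑ j, A j * D j) + (∑ j, B j * D j) := by
  simp only [Pi.sub_apply, sub_mul, mul_sub, Finset.sum_sub_distrib]
  ring

end Aux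

set_option maxHeartbeats 1000000 in
/-- the composed inexact operators are λ-contractions up to an additive error. -/
theorem inexact_composed_operators_almost_contraction
    {E F : Type*} [NormedAddCommGroup E] [NormedSpace ℝ E] [FiniteDimensional ℝ E]
    [NormedAddCommGroup F] [NormedSpace ℝ F] [FiniteDimensional ℝ F]
    {m : ℕ} (normH : (Fin m → ℝ) → ℝ)
    (hNpos : ∀ y, 0 ≤ normH y)
    (hNdef : ∀ y, normH y = 0 → y = 0)
    (hNhom : ∀ (c : ℝ) (y : Fin m → ℝ), normH (c • y) = |c| * normH y)
    (hNtri : ∀ y z, normH (y + z) ≤ normH y + normH z)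
    {Q1 : Set E} {Q2 : Set F}
    (hQ1ne : Q1.Nonempty) (hQ1cp : IsCompact Q1) (hQ1cv : Convex ℝ Q1)
    (hQ2ne : Q2.Nonempty) (hQ2cp : IsCompact Q2) (hQ2cv : Convex ℝ Q2)
    (f : E → ℝ) (h : F → ℝ) (σ1 σ2 : ℝ) (hσ1 : 0 < σ1) (hσ2 : 0 < σ2)
    (hfct : ContinuousOn f Q1) (hfsc : StrongConvexOnW Q1 (fun x => ‖x‖) σ1 f)
    (hhct : ContinuousOn h Q2) (hhsc : StrongConvexOnW Q2 (fun p => ‖p‖) σ2 h)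
    (G1 : E → Fin m → ℝ) (G2 : F → Fin m → ℝ)
    (L1 L2 : ℝ) (hL1 : 0 ≤ L1) (hL2 : 0 ≤ L2)
    (hG1 : ∀ x1 ∈ Q1, ∀ x2 ∈ Q1, dualNormH normH (G1 x1 - G1 x2) ≤ L1 * ‖x1 - x2‖)
    (hG2 : ∀ p1 ∈ Q2, ∀ p2 ∈ Q2, normH (G2 p1 - G2 p2) ≤ L2 * ‖p1 - p2‖)
    (Φ : E → F → ℝ)
    (hΦ : ∀ x p, Φ x p = f x + (∑ j, G1 x j * G2 p j) + h p)
    (hcvx1 : ∀ p ∈ Q2, ConvexOn ℝ Q1 (fun x => ∑ j, G1 x j * G2 p j))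
    (hcvx2 : ∀ x ∈ Q1, ConvexOn ℝ Q2 (fun p => ∑ j, G1 x j * G2 p j))
    (u : E → F) (v : F → E)
    (hu : ∀ x ∈ Q1, u x ∈ Q2 ∧ ∀ p ∈ Q2, Φ x (u x) ≤ Φ x p)
    (huu : ∀ x ∈ Q1, ∀ p ∈ Q2, (∀ q ∈ Q2, Φ x p ≤ Φ x q) → p = u x)
    (hv : ∀ p ∈ Q2, v p ∈ Q1 ∧ ∀ x ∈ Q1, Φ (v p) p ≤ Φ x p)
    (hvv : ∀ p ∈ Q2, ∀ x ∈ Q1, (∀ y ∈ Q1, Φ x p ≤ Φ y p) → x = v p)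
    (δ1 δ2 lam : ℝ) (hδ1 : 0 ≤ δ1) (hδ2 : 0 ≤ δ2)
    (hlam : lam = L1 ^ 2 * L2 ^ 2 / (σ1 * σ2))
    :
    (∀ xt1 ∈ Q1, ∀ xt2 ∈ Q1, ∀ pt1 pt2 : F, ∀ xh1 xh2 : E,
      InexactSol Q2 (fun p => Φ xt1 p) (u xt1) pt1 δ1 →
      InexactSol Q2 (fun p => Φ xt2 p) (u xt2) pt2 δ1 →
      InexactSol Q1 (fun x => Φ x pt1) (v pt1) xh1 δ2 →
      InexactSol Q1 (fun x => Φ x pt2) (v pt2) xh2 δ2 →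
      ‖xh1 - xh2‖ ≤ lam * ‖xt1 - xt2‖ + 2 * Real.sqrt (2 * δ2 / σ1)
        + 2 * Real.sqrt (2 * δ1 / σ2) * (L1 * L2 / σ1)) ∧
    (∀ pt1 ∈ Q2, ∀ pt2 ∈ Q2, ∀ xh1 xh2 : E, ∀ qh1 qh2 : F,
      InexactSol Q1 (fun x => Φ x pt1) (v pt1) xh1 δ2 →
      InexactSol Q1 (fun x => Φ x pt2) (v pt2) xh2 δ2 →
      InexactSol Q2 (fun p => Φ xh1 p) (u xh1) qh1 δ1 →
      InexactSol Q2 (fun p => Φ xh2 p) (u xh2) qh2 δ1 →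
      ‖qh1 - qh2‖ ≤ lam * ‖pt1 - pt2‖ + 2 * Real.sqrt (2 * δ1 / σ2)
        + 2 * Real.sqrt (2 * δ2 / σ1) * (L1 * L2 / σ2)) := by
  obtain ⟨c, hc, hcomp⟩ := norm_le_c_normH' normH hNpos hNdef hNhom hNtri
  have pairing := pairing_le_dual_mul' normH hNpos hNdef hNhom c hc hcomp
  have dualnn := dualNormH_nonneg' normH hNhom c hc hcomp
  -- strong convexity of partial maps
  have SCx : ∀ p ∈ Q2, StrongConvexOnW Q1 (fun x => ‖x‖) σ1 (fun x => Φ x p) := by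
    intro p hp x hx y hy α h0 h1
    have hf : f (α • x + (1 - α) • y) ≤
        α * f x + (1 - α) * f y - α * (1 - α) * (σ1 / 2) * ‖x - y‖ ^ 2 := hfsc hx hy h0 h1
    have hB := (hcvx1 p hp).2 hx hy h0 (show (0:ℝ) ≤ 1 - α by linarith)
      (show α + (1 - α) = 1 by ring)
    simp only [smul_eq_mul] at hB
    have hbeta : ((fun x : E => ‖x‖) (x - y) : ℝ) = ‖x - y‖ := rfl
    rw [hbeta]
    simp only [hΦ]
    have expand : α * (f x + (∑ j, G1 x j * G2 p j) + h p)
          + (1 - α) * (f y + (∑ j, G1 y j * G2 p j) + h p)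
          - α * (1 - α) * (σ1 / 2) * ‖x - y‖ ^ 2
        = (α * f x + (1 - α) * f y - α * (1 - α) * (σ1 / 2) * ‖x - y‖ ^ 2)
          + (α * (∑ j, G1 x j * G2 p j) + (1 - α) * (∑ j, G1 y j * G2 p j)) + h p := by ring
    linarith [hf, hB, expand]
  have SCp : ∀ x ∈ Q1, StrongConvexOnW Q2 (fun p => ‖p‖) σ2 (fun p => Φ x p) := by
    intro x hx p hp q hq α h0 h1
    have hh : h (α • p + (1 - α) • q) ≤
        α * h p + (1 - α) * h q - α * (1 - α) * (σ2 / 2) * ‖p - q‖ ^ 2 := hhsc hp hq h0 h1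
    have hB := (hcvx2 x hx).2 hp hq h0 (show (0:ℝ) ≤ 1 - α by linarith)
      (show α + (1 - α) = 1 by ring)
    simp only [smul_eq_mul] at hB
    have hbeta : ((fun p : F => ‖p‖) (p - q) : ℝ) = ‖p - q‖ := rfl
    rw [hbeta]
    simp only [hΦ]
    have expand : α * (f x + (∑ j, G1 x j * G2 p j) + h p)
          + (1 - α) * (f x + (∑ j, G1 x j * G2 q j) + h q)
          - α * (1 - α) * (σ2 / 2) * ‖p - q‖ ^ 2
        = (α * h p + (1 - α) * h q - α * (1 - α) * (σ2 / 2) * ‖p - q‖ ^ 2)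
          + (α * (∑ j, G1 x j * G2 p j) + (1 - α) * (∑ j, G1 x j * G2 q j)) + f x := by ring
    linarith [hh, hB, expand]
  -- Lipschitz property of v
  have Lipv : ∀ p1 ∈ Q2, ∀ p2 ∈ Q2, ‖v p1 - v p2‖ ≤ L1 * L2 / σ1 * ‖p1 - p2‖ := by
    intro p1 hp1 p2 hp2
    obtain ⟨hx1Q, hmin1⟩ := hv p1 hp1
    obtain ⟨hx2Q, hmin2⟩ := hv p2 hp2
    set x1 := v p1
    set x2 := v p2
    have hg1 := strongconvex_growth' hQ1cv (SCx p1 hp1) hx1Q hmin1 hx2Q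
    have hg2 := strongconvex_growth' hQ1cv (SCx p2 hp2) hx2Q hmin2 hx1Q
    simp only [hΦ] at hg1 hg2
    have hnorm : ‖x2 - x1‖ = ‖x1 - x2‖ := norm_sub_rev _ _
    rw [hnorm] at hg1
    have hP := sum_pair_expand' (G1 x2) (G1 x1) (G2 p1) (G2 p2)
    have hkey : σ1 * ‖x1 - x2‖ ^ 2 ≤ ∑ j, (G1 x2 - G1 x1) j * (G2 p1 - G2 p2) j := by
      rw [hP]; linarith
    have h5 := pairing (G1 x2 - G1 x1) (G2 p1 - G2 p2)
    have h6 := hG1 x2 hx2Q x1 hx1Q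
    have h7 := hG2 p1 hp1 p2 hp2
    have h8 : dualNormH normH (G1 x2 - G1 x1) * normH (G2 p1 - G2 p2)
        ≤ (L1 * ‖x2 - x1‖) * (L2 * ‖p1 - p2‖) :=
      mul_le_mul h6 h7 (hNpos _) (by positivity)
    rw [hnorm] at h8
    set d := ‖x1 - x2‖ with hd
    have hP2 : σ1 * d ^ 2 ≤ L1 * d * (L2 * ‖p1 - p2‖) := by
      calc σ1 * d ^ 2 ≤ ∑ j, (G1 x2 - G1 x1) j * (G2 p1 - G2 p2) j := hkey
        _ ≤ dualNormH normH (G1 x2 - G1 x1) * normH (G2 p1 - G2 p2) := h5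
        _ ≤ L1 * d * (L2 * ‖p1 - p2‖) := h8
    rcases (norm_nonneg (x1 - x2)).lt_or_eq with hdpos | hdzero
    · rw [← hd] at hdpos
      have h9 : σ1 * d ≤ L1 * L2 * ‖p1 - p2‖ := by
        have e1 : σ1 * d * d = σ1 * d ^ 2 := by ring
        have e2 : L1 * L2 * ‖p1 - p2‖ * d = L1 * d * (L2 * ‖p1 - p2‖) := by ring
        have h10 : σ1 * d * d ≤ L1 * L2 * ‖p1 - p2‖ * d := by linarith [hP2, e1, e2]
        exact le_of_mul_le_mul_right h10 hdpos
      rw [div_mul_eq_mul_div, le_div_iff₀ hσ1]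
      linarith [h9, mul_comm d σ1]
    · rw [hd, ← hdzero]
      positivity
  -- Lipschitz property of u
  have Lipu : ∀ x1 ∈ Q1, ∀ x2 ∈ Q1, ‖u x1 - u x2‖ ≤ L1 * L2 / σ2 * ‖x1 - x2‖ := by
    intro x1 hx1 x2 hx2
    obtain ⟨hq1Q, hmin1⟩ := hu x1 hx1
    obtain ⟨hq2Q, hmin2⟩ := hu x2 hx2
    set q1 := u x1
    set q2 := u x2
    have hg1 := strongconvex_growth' hQ2cv (SCp x1 hx1) hq1Q hmin1 hq2Q
    have hg2 := strongconvex_growth' hQ2cv (SCp x2 hx2) hq2Q hmin2 hq1Q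
    simp only [hΦ] at hg1 hg2
    have hnorm : ‖q2 - q1‖ = ‖q1 - q2‖ := norm_sub_rev _ _
    rw [hnorm] at hg1
    have hP := sum_pair_expand' (G1 x1) (G1 x2) (G2 q2) (G2 q1)
    have hkey : σ2 * ‖q1 - q2‖ ^ 2 ≤ ∑ j, (G1 x1 - G1 x2) j * (G2 q2 - G2 q1) j := by
      rw [hP]; linarith
    have h5 := pairing (G1 x1 - G1 x2) (G2 q2 - G2 q1)
    have h6 := hG1 x1 hx1 x2 hx2
    have h7 := hG2 q2 hq2Q q1 hq1Q
    have h8 : dualNormH normH (G1 x1 - G1 x2) * normH (G2 q2 - G2 q1)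
        ≤ (L1 * ‖x1 - x2‖) * (L2 * ‖q2 - q1‖) :=
      mul_le_mul h6 h7 (hNpos _) (by positivity)
    rw [hnorm] at h8
    set d := ‖q1 - q2‖ with hd
    have hP2 : σ2 * d ^ 2 ≤ L1 * ‖x1 - x2‖ * (L2 * d) := by
      calc σ2 * d ^ 2 ≤ ∑ j, (G1 x1 - G1 x2) j * (G2 q2 - G2 q1) j := hkey
        _ ≤ dualNormH normH (G1 x1 - G1 x2) * normH (G2 q2 - G2 q1) := h5
        _ ≤ L1 * ‖x1 - x2‖ * (L2 * d) := h8
    rcases (norm_nonneg (q1 - q2)).lt_or_eq with hdpos | hdzero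
    · rw [← hd] at hdpos
      have h9 : σ2 * d ≤ L1 * L2 * ‖x1 - x2‖ := by
        have e1 : σ2 * d * d = σ2 * d ^ 2 := by ring
        have e2 : L1 * L2 * ‖x1 - x2‖ * d = L1 * ‖x1 - x2‖ * (L2 * d) := by ring
        have h10 : σ2 * d * d ≤ L1 * L2 * ‖x1 - x2‖ * d := by linarith [hP2, e1, e2]
        exact le_of_mul_le_mul_right h10 hdpos
      rw [div_mul_eq_mul_div, le_div_iff₀ hσ2]
      linarith [h9, mul_comm d σ2]
    · rw [hd, ← hdzero]
      positivity
  have hKK : L1 * L2 / σ1 * (L1 * L2 / σ2) = lam := by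
    rw [hlam, div_mul_div_comm]; ring_nf
  have hK1 : (0:ℝ) ≤ L1 * L2 / σ1 := by positivity
  have hK2 : (0:ℝ) ≤ L1 * L2 / σ2 := by positivity
  have hs1 : (0:ℝ) ≤ Real.sqrt (2 * δ2 / σ1) := Real.sqrt_nonneg _
  have hs2 : (0:ℝ) ≤ Real.sqrt (2 * δ1 / σ2) := Real.sqrt_nonneg _
  constructor
  · intro xt1 hxt1 xt2 hxt2 pt1 pt2 xh1 xh2 hpt1 hpt2 hxh1 hxh2
    have hpt1Q : pt1 ∈ Q2 := hpt1.1
    have hpt2Q : pt2 ∈ Q2 := hpt2.1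
    have hd1 : ‖pt1 - u xt1‖ ≤ Real.sqrt (2 * δ1 / σ2) :=
      inexact_dist' hQ2cv hσ2 (SCp xt1 hxt1) (hu xt1 hxt1).1 (hu xt1 hxt1).2 hpt1
    have hd2 : ‖pt2 - u xt2‖ ≤ Real.sqrt (2 * δ1 / σ2) :=
      inexact_dist' hQ2cv hσ2 (SCp xt2 hxt2) (hu xt2 hxt2).1 (hu xt2 hxt2).2 hpt2
    have hd3 : ‖xh1 - v pt1‖ ≤ Real.sqrt (2 * δ2 / σ1) :=
      inexact_dist' hQ1cv hσ1 (SCx pt1 hpt1Q) (hv pt1 hpt1Q).1 (hv pt1 hpt1Q).2 hxh1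
    have hd4 : ‖xh2 - v pt2‖ ≤ Real.sqrt (2 * δ2 / σ1) :=
      inexact_dist' hQ1cv hσ1 (SCx pt2 hpt2Q) (hv pt2 hpt2Q).1 (hv pt2 hpt2Q).2 hxh2
    have hLv := Lipv pt1 hpt1Q pt2 hpt2Q
    have hLu := Lipu xt1 hxt1 xt2 hxt2
    have htr1 : ‖pt1 - pt2‖ ≤ ‖pt1 - u xt1‖ + ‖u xt1 - u xt2‖ + ‖u xt2 - pt2‖ := by
      have he : pt1 - pt2 = (pt1 - u xt1) + (u xt1 - u xt2) + (u xt2 - pt2) := by abel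
      rw [he]
      exact (norm_add_le _ _).trans (by linarith [norm_add_le (pt1 - u xt1) (u xt1 - u xt2)])
    have htr2 : ‖xh1 - xh2‖ ≤ ‖xh1 - v pt1‖ + ‖v pt1 - v pt2‖ + ‖v pt2 - xh2‖ := by
      have he : xh1 - xh2 = (xh1 - v pt1) + (v pt1 - v pt2) + (v pt2 - xh2) := by abel
      rw [he]
      exact (norm_add_le _ _).trans (by linarith [norm_add_le (xh1 - v pt1) (v pt1 - v pt2)])
    have hrev1 : ‖u xt2 - pt2‖ = ‖pt2 - u xt2‖ := norm_sub_rev _ _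
    have hrev2 : ‖v pt2 - xh2‖ = ‖xh2 - v pt2‖ := norm_sub_rev _ _
    rw [hrev1] at htr1
    rw [hrev2] at htr2
    have hpt : ‖pt1 - pt2‖ ≤ 2 * Real.sqrt (2 * δ1 / σ2) + L1 * L2 / σ2 * ‖xt1 - xt2‖ := by
      linarith
    have hmul := mul_le_mul_of_nonneg_left hpt hK1
    have hrng : L1 * L2 / σ1 * (2 * Real.sqrt (2 * δ1 / σ2) + L1 * L2 / σ2 * ‖xt1 - xt2‖)
        = L1 * L2 / σ1 * (L1 * L2 / σ2) * ‖xt1 - xt2‖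
          + 2 * Real.sqrt (2 * δ1 / σ2) * (L1 * L2 / σ1) := by ring
    rw [← hKK]
    linarith [hmul, htr2, hd3, hd4, hLv, hrng]
  · intro pt1 hpt1Q pt2 hpt2Q xh1 xh2 qh1 qh2 hxh1 hxh2 hqh1 hqh2
    have hxh1Q : xh1 ∈ Q1 := hxh1.1
    have hxh2Q : xh2 ∈ Q1 := hxh2.1
    have hd1 : ‖xh1 - v pt1‖ ≤ Real.sqrt (2 * δ2 / σ1) :=
      inexact_dist' hQ1cv hσ1 (SCx pt1 hpt1Q) (hv pt1 hpt1Q).1 (hv pt1 hpt1Q).2 hxh1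
    have hd2 : ‖xh2 - v pt2‖ ≤ Real.sqrt (2 * δ2 / σ1) :=
      inexact_dist' hQ1cv hσ1 (SCx pt2 hpt2Q) (hv pt2 hpt2Q).1 (hv pt2 hpt2Q).2 hxh2
    have hd3 : ‖qh1 - u xh1‖ ≤ Real.sqrt (2 * δ1 / σ2) :=
      inexact_dist' hQ2cv hσ2 (SCp xh1 hxh1Q) (hu xh1 hxh1Q).1 (hu xh1 hxh1Q).2 hqh1
    have hd4 : ‖qh2 - u xh2‖ ≤ Real.sqrt (2 * δ1 / σ2) :=
      inexact_dist' hQ2cv hσ2 (SCp xh2 hxh2Q) (hu xh2 hxh2Q).1 (hu xh2 hxh2Q).2 hqh2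
    have hLv := Lipv pt1 hpt1Q pt2 hpt2Q
    have hLu := Lipu xh1 hxh1Q xh2 hxh2Q
    have htr1 : ‖xh1 - xh2‖ ≤ ‖xh1 - v pt1‖ + ‖v pt1 - v pt2‖ + ‖v pt2 - xh2‖ := by
      have he : xh1 - xh2 = (xh1 - v pt1) + (v pt1 - v pt2) + (v pt2 - xh2) := by abel
      rw [he]
      exact (norm_add_le _ _).trans (by linarith [norm_add_le (xh1 - v pt1) (v pt1 - v pt2)])
    have htr2 : ‖qh1 - qh2‖ ≤ ‖qh1 - u xh1‖ + ‖u xh1 - u xh2‖ + ‖u xh2 - qh2‖ := by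
      have he : qh1 - qh2 = (qh1 - u xh1) + (u xh1 - u xh2) + (u xh2 - qh2) := by abel
      rw [he]
      exact (norm_add_le _ _).trans (by linarith [norm_add_le (qh1 - u xh1) (u xh1 - u xh2)])
    have hrev1 : ‖v pt2 - xh2‖ = ‖xh2 - v pt2‖ := norm_sub_rev _ _
    have hrev2 : ‖u xh2 - qh2‖ = ‖qh2 - u xh2‖ := norm_sub_rev _ _
    rw [hrev1] at htr1
    rw [hrev2] at htr2
    have hxh : ‖xh1 - xh2‖ ≤ 2 * Real.sqrt (2 * δ2 / σ1) + L1 * L2 / σ1 * ‖pt1 - pt2‖ := by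
      linarith
    have hmul := mul_le_mul_of_nonneg_left hxh hK2
    have hKK2 : L1 * L2 / σ2 * (L1 * L2 / σ1) = lam := by
      rw [hlam, div_mul_div_comm]; ring_nf
    have hrng : L1 * L2 / σ2 * (2 * Real.sqrt (2 * δ2 / σ1) + L1 * L2 / σ1 * ‖pt1 - pt2‖)
        = L1 * L2 / σ2 * (L1 * L2 / σ1) * ‖pt1 - pt2‖
          + 2 * Real.sqrt (2 * δ2 / σ1) * (L1 * L2 / σ2) := by ring
    rw [← hKK2]
    linarith [hmul, htr2, hd3, hd4, hLu, hrng]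
end

section
/- Consider the network manipulation model: v_1, …, v_N ∈ Δ_n; E_i* : Δ_K → ℝ continuous and β_i-strongly convex w.r.t. ‖·‖₁ with β_i > 0 (i = 1, …, N); π_k : ℝ^n → ℝ continuous and τ_k-strongly concave w.r.t. ‖·‖₂ with τ_k > 0, and η_k > 0 (k = 1, …, K); M a real n×n column-stochastic matrix with σ_min(M) > 0; t a positive integer; and the potential Φ(X,P) = Σ_{i=1}^N E_i*(p_i) + Σ_{k=1}^K ( Σ_{i=1}^N p_i^{(k)}·‖v_i − M^t x_k‖₂ − (1/η_k)·π_k(M^t x_k) ) for X = (x_1,…,x_K) ∈ (Δ_n)^K and P = (p_1,…,p_N) ∈ (Δ_K)^N. Assume κ(M)^t < ( min_{1≤k≤K}(τ_k/η_k) · min_{1≤i≤N} β_i / N )^{1/2}. Then Φ has a unique minimizer (X*, P*) over (Δ_n)^K × (Δ_K)^N. -/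
open Finset

/-- Euclidean norm on `ℝ^n`. -/
noncomputable def norm2 {n : ℕ} (x : Fin n → ℝ) : ℝ := Real.sqrt (∑ i, x i ^ 2)

/-- ℓ1-norm on `ℝ^K`. -/
def norm1 {K : ℕ} (p : Fin K → ℝ) : ℝ := ∑ k, |p k|

/-- Maximum norm on `ℝ^K`. -/
noncomputable def normInf {K : ℕ} (z : Fin K → ℝ) : ℝ := ⨆ k, |z k|

/-- The norm `‖X‖_F = (Σ_k ‖x_k‖₂²)^{1/2}` on tuples of vectors. -/
noncomputable def normF {n K : ℕ} (X : Fin K → Fin n → ℝ) : ℝ :=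
  Real.sqrt (∑ k, norm2 (X k) ^ 2)

/-- The norm `‖P‖_H = (Σ_i ‖p_i‖₁²)^{1/2}` on tuples of vectors. -/
noncomputable def normHP {K N : ℕ} (P : Fin N → Fin K → ℝ) : ℝ :=
  Real.sqrt (∑ i, norm1 (P i) ^ 2)

/-- The dual norm `‖Z‖_{H*} = (Σ_i ‖z_i‖_∞²)^{1/2}`. -/
noncomputable def normHstar {K N : ℕ} (Z : Fin N → Fin K → ℝ) : ℝ :=
  Real.sqrt (∑ i, normInf (Z i) ^ 2)

/-- Smallest singular value: `σ_min(M) = min_{‖x‖₂ = 1} ‖Mx‖₂`. -/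
noncomputable def sigmaMin {n : ℕ} (M : Matrix (Fin n) (Fin n) ℝ) : ℝ :=
  sInf {r | ∃ x : Fin n → ℝ, norm2 x = 1 ∧ r = norm2 (M.mulVec x)}

/-- Largest singular value: `σ_max(M) = max_{‖x‖₂ = 1} ‖Mx‖₂`. -/
noncomputable def sigmaMax {n : ℕ} (M : Matrix (Fin n) (Fin n) ℝ) : ℝ :=
  sSup {r | ∃ x : Fin n → ℝ, norm2 x = 1 ∧ r = norm2 (M.mulVec x)}

/-- Tuples of vectors all of whose components lie in the standard simplex `Δ_d`. -/
def prodSimplex (d c : ℕ) : Set (Fin c → Fin d → ℝ) :=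
  {Z | ∀ j, Z j ∈ stdSimplex ℝ (Fin d)}

/-- `zt` is a `δ`-inexact solution of `min_{z ∈ Q} F₀ z` (exact minimizer `zs`), the inner
product being the trace pairing on the matrix variables. -/
def InexactSolM {ι₁ ι₂ : Type*} [Fintype ι₁] [Fintype ι₂]
    (Q : Set (ι₁ → ι₂ → ℝ)) (F₀ : (ι₁ → ι₂ → ℝ) → ℝ) (zs zt : ι₁ → ι₂ → ℝ) (δ : ℝ) : Prop :=
  zt ∈ Q ∧ ∃ g : ι₁ → ι₂ → ℝ,
    (∀ y ∈ Q, F₀ zt + ∑ a, ∑ b, g a b * (y a b - zt a b) ≤ F₀ y) ∧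
    -δ ≤ ∑ a, ∑ b, g a b * (zs a b - zt a b)


section Aux
open Finset

lemma norm2_eq' {n : ℕ} (x : Fin n → ℝ) :
    norm2 x = ‖(WithLp.equiv 2 (Fin n → ℝ)).symm x‖ := by
  rw [EuclideanSpace.norm_eq, norm2]
  congr 1; apply Finset.sum_congr rfl; intro i _
  simp [sq_abs]

lemma norm2_nonneg {n : ℕ} (x : Fin n → ℝ) : 0 ≤ norm2 x := Real.sqrt_nonneg _

lemma norm2_sq {n : ℕ} (x : Fin n → ℝ) : norm2 x ^ 2 = ∑ i, x i ^ 2 := by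
  rw [norm2, Real.sq_sqrt]; positivity

lemma norm2_eq_zero {n : ℕ} {x : Fin n → ℝ} (h : norm2 x = 0) : x = 0 := by
  rw [norm2_eq'] at h
  have := norm_eq_zero.mp h
  have h2 : (WithLp.equiv 2 (Fin n → ℝ)) ((WithLp.equiv 2 (Fin n → ℝ)).symm x)
      = (WithLp.equiv 2 (Fin n → ℝ)) 0 := by rw [this]
  simpa using h2

lemma norm2_smul {n : ℕ} (c : ℝ) (x : Fin n → ℝ) : norm2 (c • x) = |c| * norm2 x := by
  rw [norm2_eq', norm2_eq']
  have : (WithLp.equiv 2 (Fin n → ℝ)).symm (c • x) = c • (WithLp.equiv 2 (Fin n → ℝ)).symm x := by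
    simp [WithLp.toLp_smul]
  rw [this, norm_smul, Real.norm_eq_abs]

lemma norm2_sub_le {n : ℕ} (u w : Fin n → ℝ) : |norm2 u - norm2 w| ≤ norm2 (u - w) := by
  rw [norm2_eq', norm2_eq', norm2_eq']
  have : (WithLp.equiv 2 (Fin n → ℝ)).symm (u - w)
      = (WithLp.equiv 2 (Fin n → ℝ)).symm u - (WithLp.equiv 2 (Fin n → ℝ)).symm w := by
    simp [WithLp.toLp_sub]
  rw [this]
  exact abs_norm_sub_norm_le _ _

lemma norm2_add_le {n : ℕ} (u w : Fin n → ℝ) : norm2 (u + w) ≤ norm2 u + norm2 w := by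
  rw [norm2_eq', norm2_eq', norm2_eq']
  have : (WithLp.equiv 2 (Fin n → ℝ)).symm (u + w)
      = (WithLp.equiv 2 (Fin n → ℝ)).symm u + (WithLp.equiv 2 (Fin n → ℝ)).symm w := by
    simp [WithLp.toLp_add]
  rw [this]; exact norm_add_le _ _

lemma norm2_sub_comm {n : ℕ} (u w : Fin n → ℝ) : norm2 (u - w) = norm2 (w - u) := by
  have : w - u = (-1 : ℝ) • (u - w) := by ext j; simp
  rw [this, norm2_smul]; simp

lemma norm2_le_norm1 {n : ℕ} (x : Fin n → ℝ) : norm2 x ≤ norm1 x := by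
  have h : ∑ i, x i ^ 2 ≤ (norm1 x) ^ 2 := by
    have hh : (norm1 x)^2 = (∑ i, |x i|) * (∑ i, |x i|) := by rw [norm1, sq]
    rw [hh]
    calc ∑ i, x i ^ 2 = ∑ i, |x i| * |x i| := by
          apply Finset.sum_congr rfl; intro i _; rw [← abs_mul, abs_mul_self, sq]
      _ ≤ ∑ i, |x i| * (∑ j, |x j|) := by
          apply Finset.sum_le_sum; intro i _
          exact mul_le_mul_of_nonneg_left
            (Finset.single_le_sum (fun j _ => abs_nonneg (x j)) (Finset.mem_univ i)) (abs_nonneg _)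
      _ = (∑ i, |x i|) * (∑ j, |x j|) := by rw [← Finset.sum_mul]
  calc norm2 x = Real.sqrt (∑ i, x i ^ 2) := rfl
    _ ≤ Real.sqrt ((norm1 x)^2) := Real.sqrt_le_sqrt h
    _ = |norm1 x| := Real.sqrt_sq_eq_abs _
    _ = norm1 x := abs_of_nonneg (Finset.sum_nonneg fun i _ => abs_nonneg _)

lemma norm1_nonneg {K : ℕ} (p : Fin K → ℝ) : 0 ≤ norm1 p :=
  Finset.sum_nonneg fun _ _ => abs_nonneg _

lemma norm1_eq_zero {K : ℕ} {p : Fin K → ℝ} (h : norm1 p = 0) : p = 0 := by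
  have := (Finset.sum_eq_zero_iff_of_nonneg (fun k _ => abs_nonneg (p k))).mp h
  funext k
  simpa using abs_eq_zero.mp (this k (Finset.mem_univ k))

noncomputable def mulVecL {n : ℕ} (M : Matrix (Fin n) (Fin n) ℝ) :
    EuclideanSpace ℝ (Fin n) →ₗ[ℝ] EuclideanSpace ℝ (Fin n) :=
  (WithLp.linearEquiv 2 ℝ (Fin n → ℝ)).symm.toLinearMap ∘ₗ M.mulVecLin ∘ₗ
    (WithLp.linearEquiv 2 ℝ (Fin n → ℝ)).toLinearMap

lemma norm2_mulVec_eq {n : ℕ} (M : Matrix (Fin n) (Fin n) ℝ) (x : Fin n → ℝ) :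
    norm2 (M.mulVec x) = ‖mulVecL M ((WithLp.equiv 2 (Fin n → ℝ)).symm x)‖ := by
  rw [norm2_eq']; rfl

lemma sset_nonempty {n : ℕ} (hn : 0 < n) (M : Matrix (Fin n) (Fin n) ℝ) :
    {r | ∃ x : Fin n → ℝ, norm2 x = 1 ∧ r = norm2 (M.mulVec x)}.Nonempty := by
  set e0 : Fin n → ℝ := fun j => if j = ⟨0, hn⟩ then 1 else 0 with he0
  refine ⟨norm2 (M.mulVec e0), ⟨e0, ?_, rfl⟩⟩
  rw [norm2]
  have : ∑ i, e0 i ^ 2 = 1 := by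
    rw [he0, Finset.sum_eq_single (⟨0, hn⟩ : Fin n)]
    · simp
    · intro b _ hb; simp [hb]
    · intro h; exact absurd (Finset.mem_univ _) h
  rw [this, Real.sqrt_one]

lemma sset_bddAbove {n : ℕ} (M : Matrix (Fin n) (Fin n) ℝ) :
    BddAbove {r | ∃ x : Fin n → ℝ, norm2 x = 1 ∧ r = norm2 (M.mulVec x)} := by
  refine ⟨‖LinearMap.toContinuousLinearMap (mulVecL M)‖, ?_⟩
  rintro r ⟨x, hx, rfl⟩
  rw [norm2_mulVec_eq]
  calc ‖mulVecL M ((WithLp.equiv 2 (Fin n → ℝ)).symm x)‖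
      = ‖LinearMap.toContinuousLinearMap (mulVecL M) ((WithLp.equiv 2 (Fin n → ℝ)).symm x)‖ := rfl
    _ ≤ ‖LinearMap.toContinuousLinearMap (mulVecL M)‖ * ‖(WithLp.equiv 2 (Fin n → ℝ)).symm x‖ :=
        (LinearMap.toContinuousLinearMap (mulVecL M)).le_opNorm _
    _ = ‖LinearMap.toContinuousLinearMap (mulVecL M)‖ := by rw [← norm2_eq', hx, mul_one]

lemma sset_bddBelow {n : ℕ} (M : Matrix (Fin n) (Fin n) ℝ) :
    BddBelow {r | ∃ x : Fin n → ℝ, norm2 x = 1 ∧ r = norm2 (M.mulVec x)} := by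
  refine ⟨0, ?_⟩; rintro r ⟨x, hx, rfl⟩; exact norm2_nonneg _

lemma norm2_mulVec_le {n : ℕ} (M : Matrix (Fin n) (Fin n) ℝ) (x : Fin n → ℝ) :
    norm2 (M.mulVec x) ≤ sigmaMax M * norm2 x := by
  by_cases hx : norm2 x = 0
  · rw [hx, norm2_eq_zero hx, Matrix.mulVec_zero, mul_zero]
    have : norm2 (0 : Fin n → ℝ) = 0 := by
      have := norm2_smul (0:ℝ) (0 : Fin n → ℝ); simpa using this
    rw [this]
  · have hxpos : 0 < norm2 x := lt_of_le_of_ne (norm2_nonneg x) (Ne.symm hx)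
    set u := (norm2 x)⁻¹ • x with hu
    have hun : norm2 u = 1 := by
      rw [hu, norm2_smul, abs_of_pos (inv_pos.mpr hxpos), inv_mul_cancel₀ hx]
    have hle : norm2 (M.mulVec u) ≤ sigmaMax M :=
      le_csSup (sset_bddAbove M) ⟨u, hun, rfl⟩
    have huu : M.mulVec u = (norm2 x)⁻¹ • M.mulVec x := by rw [hu, Matrix.mulVec_smul]
    rw [huu, norm2_smul, abs_of_pos (inv_pos.mpr hxpos)] at hle
    calc norm2 (M.mulVec x) = norm2 x * ((norm2 x)⁻¹ * norm2 (M.mulVec x)) := by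
          field_simp
      _ ≤ norm2 x * sigmaMax M := mul_le_mul_of_nonneg_left hle (le_of_lt hxpos)
      _ = sigmaMax M * norm2 x := mul_comm _ _

lemma sigmaMin_mulVec_le {n : ℕ} (M : Matrix (Fin n) (Fin n) ℝ) (x : Fin n → ℝ) :
    sigmaMin M * norm2 x ≤ norm2 (M.mulVec x) := by
  by_cases hx : norm2 x = 0
  · rw [hx, mul_zero]; exact norm2_nonneg _
  · have hxpos : 0 < norm2 x := lt_of_le_of_ne (norm2_nonneg x) (Ne.symm hx)
    set u := (norm2 x)⁻¹ • x with hu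
    have hun : norm2 u = 1 := by
      rw [hu, norm2_smul, abs_of_pos (inv_pos.mpr hxpos), inv_mul_cancel₀ hx]
    have hle : sigmaMin M ≤ norm2 (M.mulVec u) := csInf_le (sset_bddBelow M) ⟨u, hun, rfl⟩
    have huu : M.mulVec u = (norm2 x)⁻¹ • M.mulVec x := by rw [hu, Matrix.mulVec_smul]
    rw [huu, norm2_smul, abs_of_pos (inv_pos.mpr hxpos)] at hle
    calc sigmaMin M * norm2 x ≤ ((norm2 x)⁻¹ * norm2 (M.mulVec x)) * norm2 x :=
          mul_le_mul_of_nonneg_right hle (le_of_lt hxpos)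
      _ = norm2 (M.mulVec x) := by field_simp

lemma sigmaMax_nonneg {n : ℕ} (hn : 0 < n) (M : Matrix (Fin n) (Fin n) ℝ) : 0 ≤ sigmaMax M := by
  obtain ⟨r, hr⟩ := sset_nonempty hn M
  have : 0 ≤ r := by obtain ⟨x, _, rfl⟩ := hr; exact norm2_nonneg _
  exact le_trans this (le_csSup (sset_bddAbove M) hr)

lemma norm2_pow_mulVec_le {n : ℕ} (hn : 0 < n) (M : Matrix (Fin n) (Fin n) ℝ) (t : ℕ)
    (x : Fin n → ℝ) : norm2 ((M ^ t).mulVec x) ≤ (sigmaMax M) ^ t * norm2 x := by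
  induction t with
  | zero => simp [Matrix.one_mulVec]
  | succ t ih =>
      have h1 : (M ^ (t+1)).mulVec x = M.mulVec ((M ^ t).mulVec x) := by
        rw [Matrix.mulVec_mulVec, ← pow_succ']
      rw [h1]
      calc norm2 (M.mulVec ((M ^ t).mulVec x)) ≤ sigmaMax M * norm2 ((M ^ t).mulVec x) :=
            norm2_mulVec_le M _
        _ ≤ sigmaMax M * ((sigmaMax M) ^ t * norm2 x) :=
            mul_le_mul_of_nonneg_left ih (sigmaMax_nonneg hn M)
        _ = (sigmaMax M) ^ (t+1) * norm2 x := by ring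

lemma sigmaMin_pow_mulVec_le {n : ℕ} (M : Matrix (Fin n) (Fin n) ℝ) (hM : 0 < sigmaMin M)
    (t : ℕ) (x : Fin n → ℝ) :
    (sigmaMin M) ^ t * norm2 x ≤ norm2 ((M ^ t).mulVec x) := by
  induction t with
  | zero => simp [Matrix.one_mulVec]
  | succ t ih =>
      have h1 : (M ^ (t+1)).mulVec x = M.mulVec ((M ^ t).mulVec x) := by
        rw [Matrix.mulVec_mulVec, ← pow_succ']
      rw [h1]
      calc (sigmaMin M) ^ (t+1) * norm2 x = sigmaMin M * ((sigmaMin M) ^ t * norm2 x) := by ring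
        _ ≤ sigmaMin M * norm2 ((M ^ t).mulVec x) := mul_le_mul_of_nonneg_left ih (le_of_lt hM)
        _ ≤ norm2 (M.mulVec ((M ^ t).mulVec x)) := sigmaMin_mulVec_le M _

lemma iInf_pos' {m : ℕ} (hm : 0 < m) (f : Fin m → ℝ) (hf : ∀ i, 0 < f i) : 0 < ⨅ i, f i := by
  haveI : Nonempty (Fin m) := ⟨⟨0, hm⟩⟩
  obtain ⟨i0, -, hi0⟩ := Finset.exists_min_image Finset.univ f ⟨⟨0, hm⟩, Finset.mem_univ _⟩
  exact lt_of_lt_of_le (hf i0) (le_ciInf fun j => hi0 j (Finset.mem_univ j))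

lemma myInf_le {m : ℕ} (f : Fin m → ℝ) (i : Fin m) : (⨅ j, f j) ≤ f i :=
  ciInf_le (Set.Finite.bddBelow (Set.finite_range f)) i

lemma gain_pos (a b st S A B : ℝ) (ha : 0 < a) (hb : 0 < b) (hst : 0 < st)
    (hA : 0 ≤ A) (hB : 0 ≤ B) (hAB : 0 < A ∨ 0 < B)
    (hc : S < st * Real.sqrt (a * b)) :
    0 < a * st ^ 2 / 8 * A ^ 2 + b / 8 * B ^ 2 - S / 4 * (A * B) := by
  set u := Real.sqrt a with hu
  set w := Real.sqrt b with hw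
  have hu2 : u ^ 2 = a := Real.sq_sqrt ha.le
  have hw2 : w ^ 2 = b := Real.sq_sqrt hb.le
  have huw : Real.sqrt (a * b) = u * w := Real.sqrt_mul ha.le b
  have hupos : 0 < u := Real.sqrt_pos.mpr ha
  have hwpos : 0 < w := Real.sqrt_pos.mpr hb
  rw [huw] at hc
  rw [← hu2, ← hw2]
  rcases hAB with hA' | hB'
  · rcases eq_or_lt_of_le hB with hB0 | hBpos
    · rw [← hB0]
      have h1 : 0 < u ^ 2 * st ^ 2 / 8 * A ^ 2 := by positivity
      nlinarith
    · nlinarith [sq_nonneg (u * st * A - w * B),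
        mul_pos (sub_pos.mpr hc) (mul_pos hA' hBpos)]
  · rcases eq_or_lt_of_le hA with hA0 | hApos
    · rw [← hA0]
      have h1 : 0 < w ^ 2 / 8 * B ^ 2 := by positivity
      nlinarith
    · nlinarith [sq_nonneg (u * st * A - w * B),
        mul_pos (sub_pos.mpr hc) (mul_pos hApos hB')]

lemma cauchy_schwarz_sum {m : ℕ} (c d : Fin m → ℝ) (hc : ∀ k, 0 ≤ c k) (hd : ∀ k, 0 ≤ d k) :
    (∑ k, c k * d k) ≤ Real.sqrt (∑ k, c k ^ 2) * Real.sqrt (∑ k, d k ^ 2) := by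
  have h := Finset.sum_mul_sq_le_sq_mul_sq Finset.univ c d
  have h0 : 0 ≤ ∑ k, c k * d k := Finset.sum_nonneg fun k _ => mul_nonneg (hc k) (hd k)
  calc ∑ k, c k * d k = Real.sqrt ((∑ k, c k * d k) ^ 2) := (Real.sqrt_sq h0).symm
    _ ≤ Real.sqrt ((∑ k, c k ^ 2) * ∑ k, d k ^ 2) := Real.sqrt_le_sqrt h
    _ = Real.sqrt (∑ k, c k ^ 2) * Real.sqrt (∑ k, d k ^ 2) :=
        Real.sqrt_mul (Finset.sum_nonneg fun k _ => sq_nonneg _) _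

end Aux
noncomputable def PhiE {n K N : ℕ} (v : Fin N → Fin n → ℝ) (Estar : Fin N → (Fin K → ℝ) → ℝ)
    (π : Fin K → (Fin n → ℝ) → ℝ) (η : Fin K → ℝ) (M : Matrix (Fin n) (Fin n) ℝ) (t : ℕ)
    (X : Fin K → Fin n → ℝ) (P : Fin N → Fin K → ℝ) : ℝ :=
  (∑ i, Estar i (P i)) +
    ∑ k, ((∑ i, P i k * norm2 (v i - (M ^ t).mulVec (X k)))
      - (1 / η k) * π k ((M ^ t).mulVec (X k)))

set_option maxHeartbeats 1000000 in
lemma midpoint_lt {n K N : ℕ} (hn : 0 < n) (hK : 0 < K) (hN : 0 < N)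
    (v : Fin N → Fin n → ℝ)
    (Estar : Fin N → (Fin K → ℝ) → ℝ) (β : Fin N → ℝ) (hβ : ∀ i, 0 < β i)
    (hEsc : ∀ i, StrongConvexOnW (stdSimplex ℝ (Fin K)) norm1 (β i) (Estar i))
    (π : Fin K → (Fin n → ℝ) → ℝ) (τ η : Fin K → ℝ) (hτ : ∀ k, 0 < τ k) (hη : ∀ k, 0 < η k)
    (hπsc : ∀ k, StrongConvexOnW Set.univ norm2 (τ k) (fun y => -π k y))
    (M : Matrix (Fin n) (Fin n) ℝ) (hM : 0 < sigmaMin M) (t : ℕ)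
    (hstab : sigmaMax M ^ t * Real.sqrt N <
      sigmaMin M ^ t * Real.sqrt ((⨅ k, τ k / η k) * (⨅ i, β i)))
    (X X' : Fin K → Fin n → ℝ) (P P' : Fin N → Fin K → ℝ)
    (hX : X ∈ prodSimplex n K) (hX' : X' ∈ prodSimplex n K)
    (hP : P ∈ prodSimplex K N) (hP' : P' ∈ prodSimplex K N)
    (hne : ¬ (X = X' ∧ P = P')) :
    PhiE v Estar π η M t (fun k => (1/2 : ℝ) • X k + (1 - (1/2 : ℝ)) • X' k)
        (fun i => (1/2 : ℝ) • P i + (1 - (1/2 : ℝ)) • P' i)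
      < PhiE v Estar π η M t X P / 2 + PhiE v Estar π η M t X' P' / 2 := by
  have hNpos : (0:ℝ) < N := by exact_mod_cast hN
  have hapos : 0 < ⨅ k, τ k / η k := iInf_pos' hK _ fun k => div_pos (hτ k) (hη k)
  have hbpos : 0 < ⨅ i, β i := iInf_pos' hN _ hβ
  have hstpos : 0 < sigmaMin M ^ t := pow_pos hM t
  have hSnn : 0 ≤ sigmaMax M ^ t := pow_nonneg (sigmaMax_nonneg hn M) t
  set a := ⨅ k, τ k / η k
  set b := ⨅ i, β i
  set st := sigmaMin M ^ t
  set S := sigmaMax M ^ t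
  set Asq := ∑ k, norm2 (X k - X' k) ^ 2 with hAsqd
  set Bsq := ∑ i, norm1 (P i - P' i) ^ 2 with hBsqd
  have hAsqnn : 0 ≤ Asq := Finset.sum_nonneg fun k _ => sq_nonneg _
  have hBsqnn : 0 ≤ Bsq := Finset.sum_nonneg fun i _ => sq_nonneg _
  set Av := Real.sqrt Asq with hAvd
  set Bv := Real.sqrt Bsq with hBvd
  have hAv2 : Av ^ 2 = Asq := Real.sq_sqrt hAsqnn
  have hBv2 : Bv ^ 2 = Bsq := Real.sq_sqrt hBsqnn
  -- not both zero
  have hABpos : 0 < Av ∨ 0 < Bv := by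
    by_contra hcon
    push_neg at hcon
    obtain ⟨h1, h2⟩ := hcon
    have hAv0 : Av = 0 := le_antisymm h1 (Real.sqrt_nonneg _)
    have hBv0 : Bv = 0 := le_antisymm h2 (Real.sqrt_nonneg _)
    have hAsq0 : Asq = 0 := by
      have := (Real.sqrt_eq_zero hAsqnn).mp hAv0; exact this
    have hBsq0 : Bsq = 0 := by
      have := (Real.sqrt_eq_zero hBsqnn).mp hBv0; exact this
    apply hne
    constructor
    · funext k
      have hsum0 : ∑ k, norm2 (X k - X' k) ^ 2 = 0 := by rw [← hAsqd]; exact hAsq0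
      have heach := (Finset.sum_eq_zero_iff_of_nonneg
        (fun k _ => sq_nonneg (norm2 (X k - X' k)))).mp hsum0 k (Finset.mem_univ k)
      have h3 : norm2 (X k - X' k) = 0 := by
        have := sq_eq_zero_iff.mp heach; exact this
      have h4 := norm2_eq_zero h3
      exact sub_eq_zero.mp h4
    · funext i
      have hsum0 : ∑ i, norm1 (P i - P' i) ^ 2 = 0 := by rw [← hBsqd]; exact hBsq0
      have heach := (Finset.sum_eq_zero_iff_of_nonneg
        (fun i _ => sq_nonneg (norm1 (P i - P' i)))).mp hsum0 i (Finset.mem_univ i)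
      have h3 : norm1 (P i - P' i) = 0 := by
        have := sq_eq_zero_iff.mp heach; exact this
      have h4 := norm1_eq_zero h3
      exact sub_eq_zero.mp h4
  -- E-part
  have hT1 : ∑ i, Estar i ((1/2 : ℝ) • P i + (1 - (1/2 : ℝ)) • P' i) ≤
      (∑ i, Estar i (P i)) / 2 + (∑ i, Estar i (P' i)) / 2 - b / 8 * Bsq := by
    have h1 : ∀ i, Estar i ((1/2 : ℝ) • P i + (1 - (1/2 : ℝ)) • P' i) ≤
        Estar i (P i) / 2 + Estar i (P' i) / 2 - b / 8 * norm1 (P i - P' i) ^ 2 := by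
      intro i
      have h2 := hEsc i (hP i) (hP' i) (by norm_num : (0:ℝ) ≤ 1/2) (by norm_num : (1:ℝ)/2 ≤ 1)
      have h3 : b ≤ β i := myInf_le β i
      have h4 : (0:ℝ) ≤ norm1 (P i - P' i) ^ 2 := sq_nonneg _
      nlinarith [h2, mul_nonneg (sub_nonneg.mpr h3) h4]
    calc ∑ i, Estar i ((1/2 : ℝ) • P i + (1 - (1/2 : ℝ)) • P' i)
        ≤ ∑ i, (Estar i (P i) / 2 + Estar i (P' i) / 2 - b / 8 * norm1 (P i - P' i) ^ 2) :=
          Finset.sum_le_sum fun i _ => h1 i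
      _ = (∑ i, Estar i (P i)) / 2 + (∑ i, Estar i (P' i)) / 2 - b / 8 * Bsq := by
          rw [hBsqd, Finset.sum_sub_distrib, Finset.sum_add_distrib, ← Finset.sum_div,
            ← Finset.sum_div, ← Finset.mul_sum]
  -- π-part (pointwise)
  have hPi : ∀ k, -((1 / η k) * π k ((M ^ t).mulVec ((1/2 : ℝ) • X k + (1 - (1/2 : ℝ)) • X' k))) ≤
      -((1 / η k) * π k ((M ^ t).mulVec (X k))) / 2
      - ((1 / η k) * π k ((M ^ t).mulVec (X' k))) / 2
      - a * st ^ 2 / 8 * norm2 (X k - X' k) ^ 2 := by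
    intro k
    set yk := (M ^ t).mulVec (X k) with hyk
    set yk' := (M ^ t).mulVec (X' k) with hyk'
    have hmid : (M ^ t).mulVec ((1/2 : ℝ) • X k + (1 - (1/2 : ℝ)) • X' k)
        = (1/2 : ℝ) • yk + (1 - (1/2 : ℝ)) • yk' := by
      rw [Matrix.mulVec_add, Matrix.mulVec_smul, Matrix.mulVec_smul]
    have h2 := hπsc k (Set.mem_univ yk) (Set.mem_univ yk')
      (by norm_num : (0:ℝ) ≤ 1/2) (by norm_num : (1:ℝ)/2 ≤ 1)
    simp only at h2
    have hck : (0:ℝ) < 1 / η k := div_pos one_pos (hη k)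
    have hτη : a ≤ τ k / η k := myInf_le _ k
    have hsub : yk - yk' = (M ^ t).mulVec (X k - X' k) := by
      rw [hyk, hyk', Matrix.mulVec_sub]
    have hY : st * norm2 (X k - X' k) ≤ norm2 (yk - yk') := by
      rw [hsub]; exact sigmaMin_pow_mulVec_le M hM t _
    have hY2 : st ^ 2 * norm2 (X k - X' k) ^ 2 ≤ norm2 (yk - yk') ^ 2 := by
      have h0 : 0 ≤ st * norm2 (X k - X' k) := mul_nonneg hstpos.le (norm2_nonneg _)
      nlinarith [hY, norm2_nonneg (yk - yk'), h0]
    have h5 : a * (st ^ 2 * norm2 (X k - X' k) ^ 2) ≤ (τ k / η k) * norm2 (yk - yk') ^ 2 :=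
      mul_le_mul hτη hY2 (by positivity) (le_trans hapos.le hτη)
    rw [hmid]
    have h6 := mul_le_mul_of_nonneg_left h2 hck.le
    ring_nf at h6 h5 ⊢
    linarith [h6, h5]
  -- convexity of the distance terms
  have hconv : ∀ (i : Fin N) (k : Fin K),
      norm2 (v i - (M ^ t).mulVec ((1/2 : ℝ) • X k + (1 - (1/2 : ℝ)) • X' k)) ≤
        norm2 (v i - (M ^ t).mulVec (X k)) / 2 + norm2 (v i - (M ^ t).mulVec (X' k)) / 2 := by
    intro i k
    have hmid : v i - (M ^ t).mulVec ((1/2 : ℝ) • X k + (1 - (1/2 : ℝ)) • X' k)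
        = (1/2 : ℝ) • (v i - (M ^ t).mulVec (X k))
          + (1/2 : ℝ) • (v i - (M ^ t).mulVec (X' k)) := by
      rw [Matrix.mulVec_add, Matrix.mulVec_smul, Matrix.mulVec_smul]
      ext j
      simp only [Pi.add_apply, Pi.smul_apply, Pi.sub_apply, smul_eq_mul]
      ring
    rw [hmid]
    calc norm2 ((1/2 : ℝ) • (v i - (M ^ t).mulVec (X k))
            + (1/2 : ℝ) • (v i - (M ^ t).mulVec (X' k)))
        ≤ norm2 ((1/2 : ℝ) • (v i - (M ^ t).mulVec (X k)))
          + norm2 ((1/2 : ℝ) • (v i - (M ^ t).mulVec (X' k))) := norm2_add_le _ _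
      _ = norm2 (v i - (M ^ t).mulVec (X k)) / 2 + norm2 (v i - (M ^ t).mulVec (X' k)) / 2 := by
          rw [norm2_smul, norm2_smul]
          rw [abs_of_nonneg (by norm_num : (0:ℝ) ≤ 1/2)]
          ring
  -- Lipschitz bound on the distance terms
  have hLip : ∀ (i : Fin N) (k : Fin K),
      |norm2 (v i - (M ^ t).mulVec (X k)) - norm2 (v i - (M ^ t).mulVec (X' k))| ≤
        S * norm2 (X k - X' k) := by
    intro i k
    have h1 := norm2_sub_le (v i - (M ^ t).mulVec (X k)) (v i - (M ^ t).mulVec (X' k))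
    have h2 : (v i - (M ^ t).mulVec (X k)) - (v i - (M ^ t).mulVec (X' k))
        = (M ^ t).mulVec (X' k - X k) := by
      rw [Matrix.mulVec_sub]
      ext j
      simp only [Pi.sub_apply]
      ring
    rw [h2] at h1
    calc |norm2 (v i - (M ^ t).mulVec (X k)) - norm2 (v i - (M ^ t).mulVec (X' k))|
        ≤ norm2 ((M ^ t).mulVec (X' k - X k)) := h1
      _ ≤ S * norm2 (X' k - X k) := norm2_pow_mulVec_le hn M t _
      _ = S * norm2 (X k - X' k) := by rw [norm2_sub_comm]
  -- pointwise coupling bound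
  have hcp : ∀ (k : Fin K) (i : Fin N),
      ((1/2 : ℝ) • P i + (1 - (1/2 : ℝ)) • P' i) k
          * norm2 (v i - (M ^ t).mulVec ((1/2 : ℝ) • X k + (1 - (1/2 : ℝ)) • X' k)) ≤
        P i k * norm2 (v i - (M ^ t).mulVec (X k)) / 2
        + P' i k * norm2 (v i - (M ^ t).mulVec (X' k)) / 2
        + 1/4 * (|P i k - P' i k| * (S * norm2 (X k - X' k))) := by
    intro k i
    have e0 : ((1/2 : ℝ) • P i + (1 - (1/2 : ℝ)) • P' i) k = P i k / 2 + P' i k / 2 := by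
      simp only [Pi.add_apply, Pi.smul_apply, smul_eq_mul]
      ring
    have e1 : (0:ℝ) ≤ ((1/2 : ℝ) • P i + (1 - (1/2 : ℝ)) • P' i) k := by
      rw [e0]
      linarith [(hP i).1 k, (hP' i).1 k]
    have e2 := mul_le_mul_of_nonneg_left (hconv i k) e1
    rw [e0] at e2
    have e3 := hLip i k
    have e4 : -((P i k - P' i k)
        * (norm2 (v i - (M ^ t).mulVec (X k)) - norm2 (v i - (M ^ t).mulVec (X' k)))) ≤
        |P i k - P' i k| * (S * norm2 (X k - X' k)) := by
      calc -((P i k - P' i k) * (norm2 (v i - (M ^ t).mulVec (X k))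
              - norm2 (v i - (M ^ t).mulVec (X' k))))
          ≤ |(P i k - P' i k) * (norm2 (v i - (M ^ t).mulVec (X k))
              - norm2 (v i - (M ^ t).mulVec (X' k)))| := neg_le_abs _
        _ = |P i k - P' i k| * |norm2 (v i - (M ^ t).mulVec (X k))
              - norm2 (v i - (M ^ t).mulVec (X' k))| := abs_mul _ _
        _ ≤ |P i k - P' i k| * (S * norm2 (X k - X' k)) :=
            mul_le_mul_of_nonneg_left e3 (abs_nonneg _)
    rw [e0]
    nlinarith [e2, e4]
  -- sum of coupling errors, Cauchy–Schwarz
  have hcoup : ∑ k, (∑ i, |P i k - P' i k|) * norm2 (X k - X' k)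
      ≤ Av * (Real.sqrt N * Bv) := by
    have hCS := cauchy_schwarz_sum (fun k => ∑ i, |P i k - P' i k|)
      (fun k => norm2 (X k - X' k))
      (fun k => Finset.sum_nonneg fun i _ => abs_nonneg _) (fun k => norm2_nonneg _)
    have hc2 : ∑ k, (∑ i, |P i k - P' i k|) ^ 2 ≤ N * Bsq := by
      have h1 : ∀ k : Fin K, (∑ i, |P i k - P' i k|) ^ 2 ≤ N * ∑ i, (P i k - P' i k) ^ 2 := by
        intro k
        have := sq_sum_le_card_mul_sum_sq
          (s := (Finset.univ : Finset (Fin N))) (f := fun i => |P i k - P' i k|)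
        simpa [sq_abs, Finset.card_univ] using this
      calc ∑ k, (∑ i, |P i k - P' i k|) ^ 2 ≤ ∑ k, (N : ℝ) * ∑ i, (P i k - P' i k) ^ 2 :=
            Finset.sum_le_sum fun k _ => h1 k
        _ = N * ∑ k, ∑ i, (P i k - P' i k) ^ 2 := by rw [← Finset.mul_sum]
        _ = N * ∑ i, ∑ k, (P i k - P' i k) ^ 2 := by rw [Finset.sum_comm]
        _ ≤ N * Bsq := by
            apply mul_le_mul_of_nonneg_left _ (Nat.cast_nonneg N)
            rw [hBsqd]
            apply Finset.sum_le_sum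
            intro i _
            have h2 : ∑ k, (P i k - P' i k) ^ 2 = norm2 (P i - P' i) ^ 2 := by
              rw [norm2_sq]; simp only [Pi.sub_apply]
            rw [h2]
            exact pow_le_pow_left₀ (norm2_nonneg _) (norm2_le_norm1 (P i - P' i)) 2
    calc ∑ k, (∑ i, |P i k - P' i k|) * norm2 (X k - X' k)
        ≤ Real.sqrt (∑ k, (∑ i, |P i k - P' i k|) ^ 2)
            * Real.sqrt (∑ k, norm2 (X k - X' k) ^ 2) := hCS
      _ ≤ Real.sqrt ((N : ℝ) * Bsq) * Real.sqrt (∑ k, norm2 (X k - X' k) ^ 2) :=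
          mul_le_mul_of_nonneg_right (Real.sqrt_le_sqrt hc2) (Real.sqrt_nonneg _)
      _ = Av * (Real.sqrt N * Bv) := by
          rw [← hAsqd, Real.sqrt_mul (Nat.cast_nonneg N), hAvd, hBvd]
          ring
  -- coupling sum bound
  have hT2 : ∑ k, ∑ i, ((1/2 : ℝ) • P i + (1 - (1/2 : ℝ)) • P' i) k
        * norm2 (v i - (M ^ t).mulVec ((1/2 : ℝ) • X k + (1 - (1/2 : ℝ)) • X' k)) ≤
      (∑ k, ∑ i, P i k * norm2 (v i - (M ^ t).mulVec (X k))) / 2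
      + (∑ k, ∑ i, P' i k * norm2 (v i - (M ^ t).mulVec (X' k))) / 2
      + S * Real.sqrt N / 4 * (Av * Bv) := by
    have step1 : ∑ k, ∑ i, ((1/2 : ℝ) • P i + (1 - (1/2 : ℝ)) • P' i) k
        * norm2 (v i - (M ^ t).mulVec ((1/2 : ℝ) • X k + (1 - (1/2 : ℝ)) • X' k)) ≤
        ∑ k, ∑ i, (P i k * norm2 (v i - (M ^ t).mulVec (X k)) / 2
          + P' i k * norm2 (v i - (M ^ t).mulVec (X' k)) / 2
          + 1/4 * (|P i k - P' i k| * (S * norm2 (X k - X' k)))) :=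
      Finset.sum_le_sum fun k _ => Finset.sum_le_sum fun i _ => hcp k i
    have step2 : ∑ k, ∑ i, (P i k * norm2 (v i - (M ^ t).mulVec (X k)) / 2
          + P' i k * norm2 (v i - (M ^ t).mulVec (X' k)) / 2
          + 1/4 * (|P i k - P' i k| * (S * norm2 (X k - X' k))))
        = (∑ k, ∑ i, P i k * norm2 (v i - (M ^ t).mulVec (X k))) / 2
          + (∑ k, ∑ i, P' i k * norm2 (v i - (M ^ t).mulVec (X' k))) / 2
          + S/4 * ∑ k, (∑ i, |P i k - P' i k|) * norm2 (X k - X' k) := by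
      simp only [Finset.sum_add_distrib, ← Finset.sum_div]
      congr 1
      rw [Finset.mul_sum]
      apply Finset.sum_congr rfl
      intro k _
      calc ∑ i, 1/4 * (|P i k - P' i k| * (S * norm2 (X k - X' k)))
          = ∑ i, |P i k - P' i k| * (S/4 * norm2 (X k - X' k)) := by
            apply Finset.sum_congr rfl; intro i _; ring
        _ = (∑ i, |P i k - P' i k|) * (S/4 * norm2 (X k - X' k)) := by
            rw [← Finset.sum_mul]
        _ = S/4 * ((∑ i, |P i k - P' i k|) * norm2 (X k - X' k)) := by ring
    have step3 : S/4 * ∑ k, (∑ i, |P i k - P' i k|) * norm2 (X k - X' k)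
        ≤ S/4 * (Av * (Real.sqrt N * Bv)) :=
      mul_le_mul_of_nonneg_left hcoup (by positivity)
    calc ∑ k, ∑ i, ((1/2 : ℝ) • P i + (1 - (1/2 : ℝ)) • P' i) k
          * norm2 (v i - (M ^ t).mulVec ((1/2 : ℝ) • X k + (1 - (1/2 : ℝ)) • X' k))
        ≤ (∑ k, ∑ i, P i k * norm2 (v i - (M ^ t).mulVec (X k))) / 2
          + (∑ k, ∑ i, P' i k * norm2 (v i - (M ^ t).mulVec (X' k))) / 2
          + S/4 * ∑ k, (∑ i, |P i k - P' i k|) * norm2 (X k - X' k) := by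
          rw [← step2]; exact step1
      _ ≤ (∑ k, ∑ i, P i k * norm2 (v i - (M ^ t).mulVec (X k))) / 2
          + (∑ k, ∑ i, P' i k * norm2 (v i - (M ^ t).mulVec (X' k))) / 2
          + S/4 * (Av * (Real.sqrt N * Bv)) := by linarith [step3]
      _ = (∑ k, ∑ i, P i k * norm2 (v i - (M ^ t).mulVec (X k))) / 2
          + (∑ k, ∑ i, P' i k * norm2 (v i - (M ^ t).mulVec (X' k))) / 2
          + S * Real.sqrt N / 4 * (Av * Bv) := by ring
  -- assemble
  have hsum := Finset.sum_le_sum fun k (_ : k ∈ (Finset.univ : Finset (Fin K))) => hPi k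
  simp only [Finset.sum_sub_distrib, Finset.sum_neg_distrib, ← Finset.sum_div,
    ← Finset.mul_sum, neg_div] at hsum
  rw [← hAsqd] at hsum
  have hgain := gain_pos a b st (S * Real.sqrt (N:ℝ)) Av Bv hapos hbpos hstpos
    (Real.sqrt_nonneg _) (Real.sqrt_nonneg _) hABpos hstab
  rw [hAv2, hBv2] at hgain
  simp only [PhiE]
  rw [Finset.sum_sub_distrib, Finset.sum_sub_distrib, Finset.sum_sub_distrib]
  linarith [hT1, hT2, hsum, hgain]

lemma stdSimplex_vertex_mem {d : ℕ} (hd : 0 < d) :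
    (fun j => if j = (⟨0, hd⟩ : Fin d) then (1:ℝ) else 0) ∈ stdSimplex ℝ (Fin d) := by
  constructor
  · intro j; dsimp only; split <;> norm_num
  · rw [Finset.sum_eq_single (⟨0, hd⟩ : Fin d)]
    · simp
    · intro b _ hb; simp [hb]
    · intro h; exact absurd (Finset.mem_univ _) h

lemma prodSimplex_eq_pi (d c : ℕ) :
    prodSimplex d c = Set.pi Set.univ (fun _ : Fin c => stdSimplex ℝ (Fin d)) := by
  ext Z; simp [prodSimplex, Set.mem_pi]

lemma prodSimplex_isCompact (d c : ℕ) : IsCompact (prodSimplex d c) := by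
  rw [prodSimplex_eq_pi]
  exact isCompact_univ_pi fun _ => isCompact_stdSimplex _ _

lemma prodSimplex_nonempty (d c : ℕ) (hd : 0 < d) : (prodSimplex d c).Nonempty :=
  ⟨fun _ j => if j = (⟨0, hd⟩ : Fin d) then (1:ℝ) else 0,
    fun _ => stdSimplex_vertex_mem hd⟩

lemma norm2_continuous {n : ℕ} : Continuous (norm2 (n := n)) := by
  have : (norm2 (n := n)) = fun x => Real.sqrt (∑ i, x i ^ 2) := rfl
  rw [this]
  exact Real.continuous_sqrt.comp
    (continuous_finset_sum _ fun i _ => (continuous_apply i).pow 2)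

lemma mulVec_continuous {n : ℕ} (A : Matrix (Fin n) (Fin n) ℝ) :
    Continuous fun x : Fin n → ℝ => A.mulVec x := by
  have h := LinearMap.continuous_of_finiteDimensional (Matrix.mulVecLin A)
  exact h.congr fun x => by simp [Matrix.mulVecLin_apply]

set_option maxHeartbeats 1000000 in
lemma phiE_continuousOn {n K N : ℕ} (v : Fin N → Fin n → ℝ)
    (Estar : Fin N → (Fin K → ℝ) → ℝ)
    (hEc : ∀ i, ContinuousOn (Estar i) (stdSimplex ℝ (Fin K)))
    (π : Fin K → (Fin n → ℝ) → ℝ) (hπc : ∀ k, Continuous (π k))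
    (η : Fin K → ℝ) (M : Matrix (Fin n) (Fin n) ℝ) (t : ℕ) :
    ContinuousOn (fun z : (Fin K → Fin n → ℝ) × (Fin N → Fin K → ℝ) =>
      PhiE v Estar π η M t z.1 z.2) ((prodSimplex n K) ×ˢ (prodSimplex K N)) := by
  apply ContinuousOn.add
  · apply continuousOn_finset_sum
    intro i _
    apply ContinuousOn.comp (hEc i)
      (((continuous_apply i).comp continuous_snd).continuousOn)
    intro z hz
    exact hz.2 i
  · apply Continuous.continuousOn
    apply continuous_finset_sum
    intro k _
    apply Continuous.sub
    · apply continuous_finset_sum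
      intro i _
      apply Continuous.mul
      · exact (continuous_apply k).comp ((continuous_apply i).comp continuous_snd)
      · exact norm2_continuous.comp (continuous_const.sub
          ((mulVec_continuous (M ^ t)).comp ((continuous_apply k).comp continuous_fst)))
    · exact continuous_const.mul ((hπc k).comp
        ((mulVec_continuous (M ^ t)).comp ((continuous_apply k).comp continuous_fst)))

set_option maxHeartbeats 1000000 in
/-- under the stability condition
`κ(M)^t < (min_k (τ_k/η_k) · min_i β_i / N)^{1/2}`, the potential `Φ` has a unique
minimizer `(X*, P*)` over `(Δ_n)^K × (Δ_K)^N`. -/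
theorem potential_has_unique_minimizer
    {n K N : ℕ} (hn : 0 < n) (hK : 0 < K) (hN : 0 < N)
    (v : Fin N → Fin n → ℝ) (hv : ∀ i, v i ∈ stdSimplex ℝ (Fin n))
    (Estar : Fin N → (Fin K → ℝ) → ℝ)
    (hEc : ∀ i, ContinuousOn (Estar i) (stdSimplex ℝ (Fin K)))
    (β : Fin N → ℝ) (hβ : ∀ i, 0 < β i)
    (hEsc : ∀ i, StrongConvexOnW (stdSimplex ℝ (Fin K)) norm1 (β i) (Estar i))
    (π : Fin K → (Fin n → ℝ) → ℝ) (hπc : ∀ k, Continuous (π k))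
    (τ η : Fin K → ℝ) (hτ : ∀ k, 0 < τ k) (hη : ∀ k, 0 < η k)
    (hπsc : ∀ k, StrongConvexOnW Set.univ norm2 (τ k) (fun y => -π k y))
    (M : Matrix (Fin n) (Fin n) ℝ)
    (hMnn : ∀ i j, 0 ≤ M i j) (hMcol : ∀ j, ∑ i, M i j = 1)
    (hM : 0 < sigmaMin M)
    (t : ℕ) (ht : 0 < t)
    (Φ : (Fin K → Fin n → ℝ) → (Fin N → Fin K → ℝ) → ℝ)
    (hΦ : ∀ X P, Φ X P = (∑ i, Estar i (P i)) +
      ∑ k, ((∑ i, P i k * norm2 (v i - (M ^ t).mulVec (X k)))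
        - (1 / η k) * π k ((M ^ t).mulVec (X k))))
    (hkappa : (sigmaMax M / sigmaMin M) ^ t
      < Real.sqrt ((⨅ k, τ k / η k) * (⨅ i, β i) / N))
    :
    ∃! z : (Fin K → Fin n → ℝ) × (Fin N → Fin K → ℝ),
      (z.1 ∈ prodSimplex n K ∧ z.2 ∈ prodSimplex K N) ∧
      ∀ X ∈ prodSimplex n K, ∀ P ∈ prodSimplex K N, Φ z.1 z.2 ≤ Φ X P := by
  classical
  have hΦeq : ∀ X P, Φ X P = PhiE v Estar π η M t X P := fun X P => hΦ X P
  have hNpos : (0:ℝ) < N := by exact_mod_cast hN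
  have hapos : 0 < ⨅ k, τ k / η k := iInf_pos' hK _ fun k => div_pos (hτ k) (hη k)
  have hbpos : 0 < ⨅ i, β i := iInf_pos' hN _ hβ
  have hstpos : 0 < sigmaMin M ^ t := pow_pos hM t
  -- stability condition in product form
  have hstab : sigmaMax M ^ t * Real.sqrt N <
      sigmaMin M ^ t * Real.sqrt ((⨅ k, τ k / η k) * (⨅ i, β i)) := by
    have h1 : (sigmaMax M / sigmaMin M) ^ t = sigmaMax M ^ t / sigmaMin M ^ t :=
      div_pow _ _ t
    rw [h1, div_lt_iff₀ hstpos] at hkappa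
    have h3 : Real.sqrt ((⨅ k, τ k / η k) * (⨅ i, β i) / N) * Real.sqrt N
        = Real.sqrt ((⨅ k, τ k / η k) * (⨅ i, β i)) := by
      rw [← Real.sqrt_mul (by positivity), div_mul_cancel₀]
      exact ne_of_gt hNpos
    calc sigmaMax M ^ t * Real.sqrt N
        < Real.sqrt ((⨅ k, τ k / η k) * (⨅ i, β i) / N) * sigmaMin M ^ t * Real.sqrt N := by
          apply mul_lt_mul_of_pos_right hkappa (Real.sqrt_pos.mpr hNpos)
      _ = sigmaMin M ^ t * (Real.sqrt ((⨅ k, τ k / η k) * (⨅ i, β i) / N) * Real.sqrt N) := by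
          ring
      _ = sigmaMin M ^ t * Real.sqrt ((⨅ k, τ k / η k) * (⨅ i, β i)) := by rw [h3]
  -- existence of a minimizer
  have hQc : IsCompact ((prodSimplex n K) ×ˢ (prodSimplex K N)) :=
    (prodSimplex_isCompact n K).prod (prodSimplex_isCompact K N)
  have hQne : ((prodSimplex n K) ×ˢ (prodSimplex K N)).Nonempty :=
    (prodSimplex_nonempty n K hn).prod (prodSimplex_nonempty K N hK)
  obtain ⟨z0, hz0Q, hz0min⟩ := hQc.exists_isMinOn hQne
    (phiE_continuousOn v Estar hEc π hπc η M t)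
  have hz0min' : ∀ X ∈ prodSimplex n K, ∀ P ∈ prodSimplex K N,
      Φ z0.1 z0.2 ≤ Φ X P := by
    intro X hX P hP
    rw [hΦeq, hΦeq]
    exact hz0min (Set.mk_mem_prod hX hP)
  refine ⟨z0, ⟨⟨hz0Q.1, hz0Q.2⟩, hz0min'⟩, ?_⟩
  rintro ⟨Y, R⟩ ⟨⟨hY, hR⟩, hmin2⟩
  by_contra hne'
  have hmneq : ¬ (Y = z0.1 ∧ R = z0.2) := by
    rintro ⟨h1, h2⟩
    exact hne' (Prod.ext h1 h2)
  have hkey := midpoint_lt hn hK hN v Estar β hβ hEsc π τ η hτ hη hπsc M hM t hstab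
    Y z0.1 R z0.2 hY hz0Q.1 hR hz0Q.2 hmneq
  have hXm : (fun k => (1/2 : ℝ) • Y k + (1 - (1/2 : ℝ)) • z0.1 k) ∈ prodSimplex n K :=
    fun k => (convex_stdSimplex ℝ (Fin n)) (hY k) (hz0Q.1 k)
      (by norm_num) (by norm_num) (by norm_num)
  have hPm : (fun i => (1/2 : ℝ) • R i + (1 - (1/2 : ℝ)) • z0.2 i) ∈ prodSimplex K N :=
    fun i => (convex_stdSimplex ℝ (Fin K)) (hR i) (hz0Q.2 i)
      (by norm_num) (by norm_num) (by norm_num)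
  have h1 : Φ z0.1 z0.2 ≤ Φ Y R := hz0min' Y hY R hR
  have h2 : Φ Y R ≤ Φ z0.1 z0.2 := hmin2 z0.1 hz0Q.1 z0.2 hz0Q.2
  have h3 : Φ z0.1 z0.2 ≤ Φ (fun k => (1/2 : ℝ) • Y k + (1 - (1/2 : ℝ)) • z0.1 k)
      (fun i => (1/2 : ℝ) • R i + (1 - (1/2 : ℝ)) • z0.2 i) := hz0min' _ hXm _ hPm
  rw [hΦeq, hΦeq] at h1
  rw [hΦeq, hΦeq] at h3
  rw [hΦeq, hΦeq] at h2
  linarith [hkey, h1, h2, h3]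
end
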